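/- The publishers game with the linear RRP ranking function (continuous strategy space [0,1]^k, continuous distance functions d*, d_0) has at least one pure Nash equilibrium, obtained as a global maximizer of the continuous potential φ(x) = Σ_i (−(1/n)·d*(x_i) − λ·d_0(x_i)) on the compact set ([0,1]^k)^n. -/

import Mathlib

/-! The game is an exact potential game: a unilateral deviation of player `i` leaves the
relevance of the other players untouched, so it changes `u_i` by exactly the change of the
`i`-th summand of `φ(x) = ∑_i (-(1/n) d*(x_i) - λ d_0(x_i))`, hence of `φ` itself.
A maximizer of the continuous `φ` on the compact strategy space therefore admits no
profitable deviation. -/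

noncomputable section

def relRel (n k : ℕ) (dstar : (Fin k → ℝ) → ℝ) (x : Fin n → (Fin k → ℝ))
    (i : Fin n) : ℝ :=
  (1 / ((n : ℝ) - 1)) * (∑ j ∈ Finset.univ.erase i, dstar (x j)) - dstar (x i)

/-- Utility under the linear RRP ranking function. -/
def util (n k : ℕ) (lam : ℝ) (dstar : (Fin k → ℝ) → ℝ)
    (d0 : Fin n → (Fin k → ℝ) → ℝ) (x : Fin n → (Fin k → ℝ)) (i : Fin n) : ℝ :=
  (1 / (n : ℝ)) * relRel n k dstar x i + 1 / (n : ℝ) - lam * d0 i (x i)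

open Function Set

section PotentialGame

variable {ι α : Type*} [DecidableEq ι]

def IsExactPotential (u : (ι → α) → ι → ℝ) (φ : (ι → α) → ℝ) : Prop :=
  ∀ x i y, u (update x i y) i - u x i = φ (update x i y) - φ x

theorem IsExactPotential.le_of_isMaxOn {u : (ι → α) → ι → ℝ} {φ : (ι → α) → ℝ}
    (hφ : IsExactPotential u φ) {S : ι → Set α} {x : ι → α} (hx : x ∈ univ.pi S)
    (hmax : IsMaxOn φ (univ.pi S) x) (i : ι) {y : α} (hy : y ∈ S i) :
    u (update x i y) i ≤ u x i := by
  have hdev : φ (update x i y) ≤ φ x :=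
    hmax ((update_mem_pi_iff_of_mem hx).mpr fun _ => hy)
  linarith [hφ x i y]

theorem Fintype.sum_apply_update [Fintype ι] (f : ι → α → ℝ) (x : ι → α) (i : ι) (y : α) :
    ∑ j, f j (update x i y j) = ∑ j, f j (x j) + (f i y - f i (x i)) := by
  simp_rw [apply_update f, Finset.sum_update_of_mem (Finset.mem_univ i),
    ← Finset.add_sum_erase _ _ (Finset.mem_univ i), Finset.sdiff_singleton_eq_erase]
  ring

theorem isExactPotential_sum [Fintype ι] {u : (ι → α) → ι → ℝ} (f : ι → α → ℝ)
    (hu : ∀ x i y, u (update x i y) i - u x i = f i y - f i (x i)) :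
    IsExactPotential u fun x => ∑ i, f i (x i) := by
  intro x i y
  dsimp only
  rw [hu, Fintype.sum_apply_update]
  ring

end PotentialGame

theorem relRel_update (n k : ℕ) (dstar : (Fin k → ℝ) → ℝ) (x : Fin n → Fin k → ℝ)
    (i : Fin n) (y : Fin k → ℝ) :
    relRel n k dstar (update x i y) i - relRel n k dstar x i = dstar (x i) - dstar y := by
  have hothers : ∑ j ∈ Finset.univ.erase i, dstar (update x i y j)
      = ∑ j ∈ Finset.univ.erase i, dstar (x j) :=
    Finset.sum_congr rfl fun j hj => by rw [update_of_ne (Finset.ne_of_mem_erase hj)]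
  simp only [relRel, hothers, update_self]
  ring

theorem isExactPotential_util (n k : ℕ) (lam : ℝ) (dstar : (Fin k → ℝ) → ℝ)
    (d0 : Fin n → (Fin k → ℝ) → ℝ) :
    IsExactPotential (util n k lam dstar d0)
      fun x => ∑ i, (-(1 / (n : ℝ)) * dstar (x i) - lam * d0 i (x i)) := by
  refine isExactPotential_sum (fun i z => -(1 / (n : ℝ)) * dstar z - lam * d0 i z) ?_
  intro x i y
  have hrel := relRel_update n k dstar x i y
  simp only [util, update_self] at hrel ⊢
  linear_combination (1 / (n : ℝ)) * hrel

theorem linRank_pure_nash_exists_general (n k : ℕ) (lam : ℝ)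
    (dstar : (Fin k → ℝ) → ℝ) (hdc : Continuous dstar)
    (d0 : Fin n → (Fin k → ℝ) → ℝ) (hd0c : ∀ i, Continuous (d0 i)) :
    ∃ x : Fin n → (Fin k → ℝ),
      (∀ i, x i ∈ Set.Icc (0 : Fin k → ℝ) 1) ∧
      (∀ y : Fin n → (Fin k → ℝ), (∀ i, y i ∈ Set.Icc (0 : Fin k → ℝ) 1) →
        (∑ i, (-(1 / (n : ℝ)) * dstar (y i) - lam * d0 i (y i))) ≤
          ∑ i, (-(1 / (n : ℝ)) * dstar (x i) - lam * d0 i (x i))) ∧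
      ∀ (i : Fin n), ∀ y ∈ Set.Icc (0 : Fin k → ℝ) 1,
        util n k lam dstar d0 (Function.update x i y) i ≤
          util n k lam dstar d0 x i := by
  set S : Set (Fin n → Fin k → ℝ) := univ.pi fun _ => Icc 0 1
  have hS : IsCompact S := isCompact_univ_pi fun _ => isCompact_Icc
  have hφ : Continuous fun x : Fin n → Fin k → ℝ =>
      ∑ i, (-(1 / (n : ℝ)) * dstar (x i) - lam * d0 i (x i)) := by
    fun_prop
  obtain ⟨x, hxS, hmax⟩ :=
    hS.exists_isMaxOn ⟨0, fun _ _ => left_mem_Icc.mpr zero_le_one⟩ hφ.continuousOn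
  exact ⟨x, fun i => hxS i (mem_univ i), fun y hy => hmax fun i _ => hy i,
    fun i y hy => (isExactPotential_util n k lam dstar d0).le_of_isMaxOn hxS hmax i hy⟩

/-- The publishers game with the linear RRP ranking function, compact strategy
space [0,1]^k and continuous d*, d_0 has a pure Nash equilibrium, obtained as
a maximizer of the continuous potential φ(x) = ∑_i (−(1/n)d*(x_i) − λd_0(x_i)). -/
theorem linRank_pure_nash_exists (n k : ℕ) (hn : 2 ≤ n) (lam : ℝ) (hlam : 0 < lam)
    (dstar : (Fin k → ℝ) → ℝ) (hdc : Continuous dstar)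
    (hdstar : ∀ y, dstar y ∈ Set.Icc (0 : ℝ) 1)
    (d0 : Fin n → (Fin k → ℝ) → ℝ) (hd0c : ∀ i, Continuous (d0 i))
    (hd0 : ∀ i y, d0 i y ∈ Set.Icc (0 : ℝ) 1) :
    ∃ x : Fin n → (Fin k → ℝ),
      (∀ i, x i ∈ Set.Icc (0 : Fin k → ℝ) 1) ∧
      (∀ y : Fin n → (Fin k → ℝ), (∀ i, y i ∈ Set.Icc (0 : Fin k → ℝ) 1) →
        (∑ i, (-(1 / (n : ℝ)) * dstar (y i) - lam * d0 i (y i))) ≤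
          ∑ i, (-(1 / (n : ℝ)) * dstar (x i) - lam * d0 i (x i))) ∧
      ∀ (i : Fin n), ∀ y ∈ Set.Icc (0 : Fin k → ℝ) 1,
        util n k lam dstar d0 (Function.update x i y) i ≤
          util n k lam dstar d0 x i :=
  linRank_pure_nash_exists_general n k lam dstar hdc d0 hd0c

end
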